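/- Let H be a Hopf algebra with bijective antipode S, J a normalized twist, Q_J = Σ S(J⁽¹⁾)·J⁽²⁾, and u_J = Q_J⁻¹·S(Q_J). Then Δ(u_J) = J·(u_J ⊗ u_J)·(S² ⊗ S²)(J⁻¹). -/

import Mathlib

open TensorProduct

noncomputable section
variable (K B : Type*) [Field K] [Ring B] [Bialgebra K B]

/-- `ε ⊗ id : B ⊗ B → B`. -/
def epsId : B ⊗[K] B →ₐ[K] B :=
  (Algebra.TensorProduct.lid K B).toAlgHom.comp
    (Algebra.TensorProduct.map (Bialgebra.counitAlgHom K B) (AlgHom.id K B))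

/-- `id ⊗ ε : B ⊗ B → B`. -/
def idEps : B ⊗[K] B →ₐ[K] B :=
  (Algebra.TensorProduct.rid K K B).toAlgHom.comp
    (Algebra.TensorProduct.map (AlgHom.id K B) (Bialgebra.counitAlgHom K B))

/-- `Δ ⊗ id`, landing in `B ⊗ (B ⊗ B)`. -/
def comulId : B ⊗[K] B →ₐ[K] B ⊗[K] (B ⊗[K] B) :=
  (Algebra.TensorProduct.assoc K K K B B B).toAlgHom.comp
    (Algebra.TensorProduct.map (Bialgebra.comulAlgHom K B) (AlgHom.id K B))

/-- `id ⊗ Δ`, landing in `B ⊗ (B ⊗ B)`. -/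
def idComul : B ⊗[K] B →ₐ[K] B ⊗[K] (B ⊗[K] B) :=
  Algebra.TensorProduct.map (AlgHom.id K B) (Bialgebra.comulAlgHom K B)

/-- The cocycle condition `(Δ ⊗ id)(J)·(J ⊗ 1) = (id ⊗ Δ)(J)·(1 ⊗ J)` for a twist. -/
def IsTwist (J : B ⊗[K] B) : Prop :=
  comulId K B J * (Algebra.TensorProduct.assoc K K K B B B (J ⊗ₜ 1)) =
    idComul K B J * ((1 : B) ⊗ₜ J)

/-- Normalization `(ε ⊗ id)(J) = (id ⊗ ε)(J) = 1`. -/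
def IsNormalized (J : B ⊗[K] B) : Prop :=
  epsId K B J = 1 ∧ idEps K B J = 1

/-- The twisted comultiplication `a ↦ J⁻¹·Δ(a)·J` (with `J'` playing the role of `J⁻¹`). -/
def comulJ (J' J : B ⊗[K] B) : B →ₗ[K] B ⊗[K] B :=
  LinearMap.mulLeft K J' ∘ₗ LinearMap.mulRight K J ∘ₗ Coalgebra.comul

end

noncomputable section
variable (K B : Type*) [Field K] [Ring B] [HopfAlgebra K B]

/-- The antipode as a linear map. -/
def anti : B →ₗ[K] B := HopfAlgebra.antipode (R := K) (A := B)

/-- `Q_J = Σ S(J⁽¹⁾)·J⁽²⁾`. -/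
def QJ (J : B ⊗[K] B) : B := LinearMap.mul' K B ((anti K B).rTensor B J)

/-- `Σ J'⁽¹⁾·S(J'⁽²⁾)`; for `J' = J⁻¹` this is the inverse of `Q_J`. -/
def QJinv (J' : B ⊗[K] B) : B := LinearMap.mul' K B ((anti K B).lTensor B J')

/-- The twisted antipode `a ↦ Q_J⁻¹·S(a)·Q_J` (with `J'` playing the role of `J⁻¹`). -/
def antiJ (J' J : B ⊗[K] B) : B →ₗ[K] B :=
  LinearMap.mulLeft K (QJinv K B J') ∘ₗ LinearMap.mulRight K (QJ K B J) ∘ₗ anti K B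

end

/-!
Write `Q = Σ S(J⁽¹⁾) J⁽²⁾`, `P = Σ J'⁽¹⁾ S(J'⁽²⁾)` and `Ŝ (x ⊗ y) = S y ⊗ S x`, so that `Ŝ` is
anti-multiplicative and `Δ ∘ S = Ŝ ∘ Δ`. The identities about `Q` come from pushing the cocycle
identity, or its inverse, through a linear map on `H ⊗ H ⊗ H` built from products and the antipode,
chosen so that the two legs of every `Δ` meet as `S(a₁) a₂` or `a₁ S(a₂)` and collapse:
`x ⊗ Y ↦ (S x ⊗ 1) Y` gives `Σ (S J⁽¹⁾ ⊗ 1) Δ J⁽²⁾ = (Q ⊗ 1) J'`, to which `x ⊗ y ↦ x S(y)`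
is then applied to get `Q P = 1`; `x ⊗ y ⊗ z ↦ x S(y) z` gives `P Q = 1`; and
`x ⊗ y ⊗ z ↦ (S y ⊗ S x) Δ z` gives `Ŝ(J) Δ(Q) = (Q ⊗ Q) J'`. Inverting, `Δ(P) = J (P ⊗ P) Ŝ(J)`,
and `Δ(P S(Q)) = Δ(P) Ŝ(Δ Q)` telescopes because `Ŝ(J) Ŝ(J') = 1` and `Ŝ ∘ Ŝ = S² ⊗ S²`.
-/

section Hopf
open Coalgebra HopfAlgebra LinearMap WithConv
open Algebra.TensorProduct (includeLeft includeRight)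

variable {R A : Type*} [CommSemiring R] [Semiring A] [HopfAlgebra R A]

variable (R A) in
def antipodeSwap : A ⊗[R] A →ₗ[R] A ⊗[R] A :=
  map (antipode R) (antipode R) ∘ₗ (TensorProduct.comm R A A).toLinearMap

@[simp]
lemma antipodeSwap_tmul (x y : A) : antipodeSwap R A (x ⊗ₜ y) = antipode R y ⊗ₜ antipode R x :=
  rfl

lemma toConv_includeLeft_mul_includeRight :
    toConv (includeLeft : A →ₐ[R] A ⊗[R] A).toLinearMap * toConv includeRight.toLinearMap =
      toConv (comul (R := R) (A := A)) := by
  have h : mul' R (A ⊗[R] A) ∘ₗ map (includeLeft : A →ₐ[R] A ⊗[R] A).toLinearMap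
      includeRight.toLinearMap = LinearMap.id := by
    ext x y; simp
  ext a
  exact congr($h (comul a))

lemma toConv_algHom_comp_one {B : Type*} [Semiring B] [Algebra R B]
    (h : A →ₐ[R] B) :
    toConv (h.toLinearMap ∘ₗ (1 : WithConv (A →ₗ[R] A)).ofConv) = 1 := by
  ext a; simp

lemma toConv_algHom_comp_antipode_mul {B : Type*} [Semiring B] [Algebra R B]
    (h : A →ₐ[R] B) :
    toConv (h.toLinearMap ∘ₗ antipode R) * toConv h.toLinearMap = 1 := by
  rw [← toConv_algHom_comp_one h, ← antipode_mul_id, ← toConv_ofConv (_ * _),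
    algHom_comp_convMul_distrib]
  rfl

lemma toConv_includeRight_antipode_mul_includeLeft_antipode :
    toConv ((includeRight : A →ₐ[R] A ⊗[R] A).toLinearMap ∘ₗ antipode R) *
        toConv (includeLeft.toLinearMap ∘ₗ antipode R) =
      toConv (antipodeSwap R A ∘ₗ comul) := by
  have h : mul' R (A ⊗[R] A) ∘ₗ map ((includeRight : A →ₐ[R] A ⊗[R] A).toLinearMap ∘ₗ
      antipode R) (includeLeft.toLinearMap ∘ₗ antipode R) = antipodeSwap R A := by
    ext x y; simp
  ext a
  exact congr($h (comul a))

/-- In the convolution algebra `Hom(A, A ⊗ A)` one has `Δ = ι₁ * ι₂` and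
`(ι₂ ∘ S) * (ι₁ ∘ S) = Ŝ ∘ Δ`, so `Ŝ ∘ Δ` is a left inverse of `Δ`, while `Δ ∘ S` is a right
inverse of `Δ`. -/
theorem comul_comp_antipode : comul ∘ₗ antipode R (A := A) = antipodeSwap R A ∘ₗ comul := by
  have h : toConv (antipodeSwap R A ∘ₗ comul) * toConv comul = 1 := by
    rw [← toConv_includeLeft_mul_includeRight,
      ← toConv_includeRight_antipode_mul_includeLeft_antipode, mul_assoc,
      ← mul_assoc (toConv (includeLeft.toLinearMap ∘ₗ _)), toConv_algHom_comp_antipode_mul,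
      one_mul, toConv_algHom_comp_antipode_mul]
  exact congr(ofConv $(left_inv_eq_right_inv h comul_right_inv)).symm

lemma toConv_includeLeft_antipode_mul_comul :
    toConv ((includeLeft : A →ₐ[R] A ⊗[R] A).toLinearMap ∘ₗ antipode R) *
      toConv (comul (R := R)) = toConv includeRight.toLinearMap := by
  rw [← toConv_includeLeft_mul_includeRight, ← mul_assoc, toConv_algHom_comp_antipode_mul,
    one_mul]

lemma comul_antipode (a : A) : comul (antipode R a) = antipodeSwap R A (comul a) :=
  congr($comul_comp_antipode a)

lemma antipodeSwap_mul (x y : A ⊗[R] A) :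
    antipodeSwap R A (x * y) = antipodeSwap R A y * antipodeSwap R A x := by
  induction x using TensorProduct.induction_on with
  | zero => simp
  | add x₁ x₂ h₁ h₂ => simp [add_mul, mul_add, h₁, h₂]
  | tmul a b =>
    induction y using TensorProduct.induction_on with
    | zero => simp
    | add y₁ y₂ h₁ h₂ => simp [add_mul, mul_add, h₁, h₂]
    | tmul c d => simp [antipode_mul_antidistrib]

lemma antipodeSwap_one : antipodeSwap R A 1 = 1 := by
  simp [Algebra.TensorProduct.one_def]

lemma antipodeSwap_antipodeSwap (x : A ⊗[R] A) :
    antipodeSwap R A (antipodeSwap R A x) =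
      map (antipode R ∘ₗ antipode R) (antipode R ∘ₗ antipode R) x := by
  induction x using TensorProduct.induction_on with
  | zero => simp
  | add x₁ x₂ h₁ h₂ => simp [h₁, h₂]
  | tmul a b => simp

variable (R A) in
def antipodeMul : A ⊗[R] A →ₗ[R] A := mul' R A ∘ₗ (antipode R).rTensor A

variable (R A) in
def mulAntipode : A ⊗[R] A →ₗ[R] A := mul' R A ∘ₗ (antipode R).lTensor A

@[simp]
lemma antipodeMul_tmul (x y : A) : antipodeMul R A (x ⊗ₜ y) = antipode R x * y := by
  simp [antipodeMul]

@[simp]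
lemma mulAntipode_tmul (x y : A) : mulAntipode R A (x ⊗ₜ y) = x * antipode R y := by
  simp [mulAntipode]

lemma antipodeMul_comul (a : A) : antipodeMul R A (comul a) = algebraMap R A (counit a) :=
  mul_antipode_rTensor_comul_apply a

lemma mulAntipode_comul (a : A) : mulAntipode R A (comul a) = algebraMap R A (counit a) :=
  mul_antipode_lTensor_comul_apply a

lemma antipodeMul_mul_tmul (y : A ⊗[R] A) (c d : A) :
    antipodeMul R A (y * c ⊗ₜ d) = antipode R c * antipodeMul R A y * d := by
  induction y using TensorProduct.induction_on with
  | zero => simp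
  | add y₁ y₂ h₁ h₂ => simp [add_mul, mul_add, h₁, h₂]
  | tmul a b => simp [antipode_mul_antidistrib, mul_assoc]

lemma antipodeMul_comul_mul (a : A) (y : A ⊗[R] A) :
    antipodeMul R A (comul a * y) = counit (R := R) a • antipodeMul R A y := by
  induction y using TensorProduct.induction_on with
  | zero => simp
  | add y₁ y₂ h₁ h₂ => simp [mul_add, h₁, h₂]
  | tmul c d =>
    simp [antipodeMul_mul_tmul, antipodeMul_comul, Algebra.algebraMap_eq_smul_one]

lemma mulAntipode_tmul_mul (c d : A) (y : A ⊗[R] A) :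
    mulAntipode R A (c ⊗ₜ d * y) = c * mulAntipode R A y * antipode R d := by
  induction y using TensorProduct.induction_on with
  | zero => simp
  | add y₁ y₂ h₁ h₂ => simp [add_mul, mul_add, h₁, h₂]
  | tmul a b => simp [antipode_mul_antidistrib, mul_assoc]

variable (R A) in
def antipodeTmulOneMul : A ⊗[R] (A ⊗[R] A) →ₗ[R] A ⊗[R] A :=
  mul' R (A ⊗[R] A) ∘ₗ map (includeLeft.toLinearMap ∘ₗ antipode R) LinearMap.id

variable (R A) in
def antipodeTmulOneMulComul : A ⊗[R] A →ₗ[R] A ⊗[R] A :=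
  mul' R (A ⊗[R] A) ∘ₗ map (includeLeft.toLinearMap ∘ₗ antipode R) (comul (R := R))

@[simp]
lemma antipodeTmulOneMul_tmul (x : A) (y : A ⊗[R] A) :
    antipodeTmulOneMul R A (x ⊗ₜ y) = (antipode R x ⊗ₜ 1) * y := by
  simp [antipodeTmulOneMul]

@[simp]
lemma antipodeTmulOneMulComul_tmul (x y : A) :
    antipodeTmulOneMulComul R A (x ⊗ₜ y) = (antipode R x ⊗ₜ 1) * comul y := by
  simp [antipodeTmulOneMulComul]

lemma antipodeTmulOneMul_assoc_tmul (z : A ⊗[R] A) (b : A) :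
    antipodeTmulOneMul R A (Algebra.TensorProduct.assoc R R R A A A (z ⊗ₜ b)) =
      antipodeMul R A z ⊗ₜ b := by
  induction z using TensorProduct.induction_on with
  | zero => simp
  | add z₁ z₂ h₁ h₂ => simp [TensorProduct.add_tmul, h₁, h₂]
  | tmul c d => simp

lemma antipodeTmulOneMulComul_comul (b : A) :
    antipodeTmulOneMulComul R A (comul b) = 1 ⊗ₜ b :=
  congr($toConv_includeLeft_antipode_mul_comul b)

lemma antipodeTmulOneMulComul_mul_tmul (y : A ⊗[R] A) (c d : A) :
    antipodeTmulOneMulComul R A (y * c ⊗ₜ d) =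
      (antipode R c ⊗ₜ 1) * antipodeTmulOneMulComul R A y * comul d := by
  induction y using TensorProduct.induction_on with
  | zero => simp
  | add y₁ y₂ h₁ h₂ => simp [add_mul, mul_add, h₁, h₂]
  | tmul a b => simp [antipode_mul_antidistrib, ← mul_assoc]

lemma antipodeTmulOneMulComul_comul_mul (b : A) (y : A ⊗[R] A) :
    antipodeTmulOneMulComul R A (comul b * y) = (1 ⊗ₜ b) * antipodeTmulOneMulComul R A y := by
  induction y using TensorProduct.induction_on with
  | zero => simp
  | add y₁ y₂ h₁ h₂ => simp [mul_add, h₁, h₂]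
  | tmul c d =>
    rw [antipodeTmulOneMulComul_mul_tmul, antipodeTmulOneMulComul_comul,
      antipodeTmulOneMulComul_tmul, ← mul_assoc]
    simp

variable (R A) in
def antipodeSwapMulComul : A ⊗[R] (A ⊗[R] A) →ₗ[R] A ⊗[R] A :=
  mul' R (A ⊗[R] A) ∘ₗ
    map (includeRight.toLinearMap ∘ₗ antipode R) (antipodeTmulOneMulComul R A)

@[simp]
lemma antipodeSwapMulComul_tmul (x : A) (y : A ⊗[R] A) :
    antipodeSwapMulComul R A (x ⊗ₜ y) =
      (1 ⊗ₜ antipode R x) * antipodeTmulOneMulComul R A y := by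
  simp [antipodeSwapMulComul]

lemma antipodeSwapMulComul_assoc_tmul (z : A ⊗[R] A) (b : A) :
    antipodeSwapMulComul R A (Algebra.TensorProduct.assoc R R R A A A (z ⊗ₜ b)) =
      antipodeSwap R A z * comul b := by
  induction z using TensorProduct.induction_on with
  | zero => simp
  | add z₁ z₂ h₁ h₂ => simp [TensorProduct.add_tmul, add_mul, h₁, h₂]
  | tmul c d => simp [← mul_assoc]

variable (R A) in
def mulAntipodeMul : A ⊗[R] (A ⊗[R] A) →ₗ[R] A := mul' R A ∘ₗ (antipodeMul R A).lTensor A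

@[simp]
lemma mulAntipodeMul_tmul (x : A) (y : A ⊗[R] A) :
    mulAntipodeMul R A (x ⊗ₜ y) = x * antipodeMul R A y := by
  simp [mulAntipodeMul]

lemma mulAntipodeMul_assoc_tmul (z : A ⊗[R] A) (b : A) :
    mulAntipodeMul R A (Algebra.TensorProduct.assoc R R R A A A (z ⊗ₜ b)) =
      mulAntipode R A z * b := by
  induction z using TensorProduct.induction_on with
  | zero => simp
  | add z₁ z₂ h₁ h₂ => simp [TensorProduct.add_tmul, add_mul, h₁, h₂]
  | tmul c d => simp [mul_assoc]

lemma mulAntipodeMul_one_tmul_mul_assoc (v w : A ⊗[R] A) :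
    mulAntipodeMul R A ((1 ⊗ₜ v) * Algebra.TensorProduct.assoc R R R A A A (w ⊗ₜ 1)) =
      mulAntipode R A w * antipodeMul R A v := by
  induction w using TensorProduct.induction_on with
  | zero => simp
  | add w₁ w₂ h₁ h₂ => simp [TensorProduct.add_tmul, mul_add, add_mul, h₁, h₂]
  | tmul e f => simp [antipodeMul_mul_tmul, mul_assoc]

end Hopf

section Twist
open Coalgebra HopfAlgebra
open Algebra.TensorProduct (assoc)

variable {K H : Type*} [Field K] [Ring H] [HopfAlgebra K H]

lemma QJ_eq_antipodeMul (u : H ⊗[K] H) : QJ K H u = antipodeMul K H u := rfl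

@[simp]
lemma epsId_tmul (a b : H) : epsId K H (a ⊗ₜ b) = counit (R := K) a • b := by
  simp [epsId]

@[simp]
lemma idEps_tmul (a b : H) : idEps K H (a ⊗ₜ b) = counit (R := K) b • a := by
  simp [idEps]

lemma comulId_tmul (a b : H) : comulId K H (a ⊗ₜ b) = assoc K K K H H H (comul a ⊗ₜ b) := rfl

@[simp]
lemma idComul_tmul (a b : H) : idComul K H (a ⊗ₜ b) = a ⊗ₜ comul b := rfl

lemma comulId_tmul_mul_assoc (a b : H) (v : H ⊗[K] H) :
    comulId K H (a ⊗ₜ b) * assoc K K K H H H (v ⊗ₜ 1) =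
      assoc K K K H H H ((comul a * v) ⊗ₜ b) := by
  rw [comulId_tmul, ← map_mul, Algebra.TensorProduct.tmul_mul_tmul, mul_one]

lemma antipodeTmulOneMul_comulId_mul (u v : H ⊗[K] H) :
    antipodeTmulOneMul K H (comulId K H u * assoc K K K H H H (v ⊗ₜ 1)) =
      QJ K H v ⊗ₜ epsId K H u := by
  induction u using TensorProduct.induction_on with
  | zero => simp
  | add u₁ u₂ h₁ h₂ => simp [add_mul, TensorProduct.tmul_add, h₁, h₂]
  | tmul a b =>
    rw [comulId_tmul_mul_assoc, antipodeTmulOneMul_assoc_tmul, antipodeMul_comul_mul, epsId_tmul,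
      TensorProduct.smul_tmul, QJ_eq_antipodeMul]

lemma antipodeTmulOneMul_idComul_mul (u v : H ⊗[K] H) :
    antipodeTmulOneMul K H (idComul K H u * (1 ⊗ₜ v)) = antipodeTmulOneMulComul K H u * v := by
  induction u using TensorProduct.induction_on with
  | zero => simp
  | add u₁ u₂ h₁ h₂ => simp [add_mul, h₁, h₂]
  | tmul a b => simp [mul_assoc]

lemma antipodeSwapMulComul_comulId_mul (u v : H ⊗[K] H) :
    antipodeSwapMulComul K H (comulId K H u * assoc K K K H H H (v ⊗ₜ 1)) =
      antipodeSwap K H v * comul (QJ K H u) := by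
  induction u using TensorProduct.induction_on with
  | zero => simp [QJ]
  | add u₁ u₂ h₁ h₂ => simp [add_mul, mul_add, QJ_eq_antipodeMul, h₁, h₂]
  | tmul a b =>
    rw [comulId_tmul_mul_assoc, antipodeSwapMulComul_assoc_tmul, antipodeSwap_mul, mul_assoc,
      ← comul_antipode, ← Bialgebra.comul_mul, QJ_eq_antipodeMul, antipodeMul_tmul]

lemma antipodeSwapMulComul_idComul_mul (u v : H ⊗[K] H) :
    antipodeSwapMulComul K H (idComul K H u * (1 ⊗ₜ v)) =
      (1 ⊗ₜ QJ K H u) * antipodeTmulOneMulComul K H v := by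
  induction u using TensorProduct.induction_on with
  | zero => simp [QJ]
  | add u₁ u₂ h₁ h₂ => simp [add_mul, TensorProduct.tmul_add, QJ_eq_antipodeMul, h₁, h₂]
  | tmul a b =>
    simp [antipodeTmulOneMulComul_comul_mul, QJ_eq_antipodeMul, ← mul_assoc]

lemma mulAntipodeMul_comulId (u : H ⊗[K] H) :
    mulAntipodeMul K H (comulId K H u) = epsId K H u := by
  induction u using TensorProduct.induction_on with
  | zero => simp
  | add u₁ u₂ h₁ h₂ => simp [h₁, h₂]
  | tmul a b =>
    simp [comulId_tmul, mulAntipodeMul_assoc_tmul, mulAntipode_comul,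
      Algebra.algebraMap_eq_smul_one]

lemma mulAntipodeMul_idComul_mul (u : H ⊗[K] H) (x : H ⊗[K] (H ⊗[K] H)) :
    mulAntipodeMul K H (idComul K H u * x) = idEps K H u * mulAntipodeMul K H x := by
  induction u using TensorProduct.induction_on with
  | zero => simp
  | add u₁ u₂ h₁ h₂ => simp [add_mul, h₁, h₂]
  | tmul a b =>
    induction x using TensorProduct.induction_on with
    | zero => simp
    | add x₁ x₂ h₁ h₂ => rw [mul_add, map_add, h₁, h₂, map_add, mul_add]
    | tmul c y => simp [antipodeMul_comul_mul, mul_assoc]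

lemma mulAntipode_antipodeTmulOneMulComul (u : H ⊗[K] H) :
    mulAntipode K H (antipodeTmulOneMulComul K H u) = antipode K (idEps K H u) := by
  induction u using TensorProduct.induction_on with
  | zero => simp
  | add u₁ u₂ h₁ h₂ => simp [h₁, h₂]
  | tmul a b =>
    simp [mulAntipode_tmul_mul, mulAntipode_comul, Algebra.algebraMap_eq_smul_one]

variable {J J' : H ⊗[K] H}

lemma IsNormalized.of_mul_eq_one (hn : IsNormalized K H J) (hJ : J * J' = 1) :
    IsNormalized K H J' := by
  constructor
  · simpa [hJ, hn.1] using (map_mul (epsId K H) J J').symm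
  · simpa [hJ, hn.2] using (map_mul (idEps K H) J J').symm

lemma IsTwist.one_tmul_mul_assoc (hc : IsTwist K H J) (hJ : J * J' = 1) (hJ' : J' * J = 1) :
    (1 ⊗ₜ J) * assoc K K K H H H (J' ⊗ₜ 1) = idComul K H J' * comulId K H J := by
  calc (1 ⊗ₜ J) * assoc K K K H H H (J' ⊗ₜ 1)
      = idComul K H J' * (idComul K H J * (1 ⊗ₜ J)) * assoc K K K H H H (J' ⊗ₜ 1) := by
        rw [← mul_assoc, ← map_mul, hJ', map_one, one_mul]
    _ = idComul K H J' * (comulId K H J * assoc K K K H H H (J ⊗ₜ 1)) *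
          assoc K K K H H H (J' ⊗ₜ 1) := by rw [← hc]
    _ = idComul K H J' * comulId K H J := by
        rw [mul_assoc, mul_assoc, ← map_mul, Algebra.TensorProduct.tmul_mul_tmul, hJ, one_mul,
          ← Algebra.TensorProduct.one_def, map_one, mul_one]

lemma IsTwist.antipodeTmulOneMulComul_eq (hc : IsTwist K H J) (hJ : J * J' = 1)
    (hn : IsNormalized K H J) :
    antipodeTmulOneMulComul K H J = (QJ K H J ⊗ₜ 1) * J' := by
  have h := congr(antipodeTmulOneMul K H $hc)
  rw [antipodeTmulOneMul_comulId_mul, antipodeTmulOneMul_idComul_mul, hn.1] at h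
  rw [h, mul_assoc, hJ, mul_one]

lemma IsTwist.QJ_mul_QJinv (hc : IsTwist K H J) (hJ : J * J' = 1) (hn : IsNormalized K H J) :
    QJ K H J * QJinv K H J' = 1 := by
  have h := congr(mulAntipode K H $(hc.antipodeTmulOneMulComul_eq hJ hn))
  rwa [mulAntipode_antipodeTmulOneMulComul, hn.2, antipode_one, mulAntipode_tmul_mul,
    antipode_one, mul_one, eq_comm] at h

lemma IsTwist.QJinv_mul_QJ (hc : IsTwist K H J) (hJ : J * J' = 1) (hJ' : J' * J = 1)
    (hn : IsNormalized K H J) :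
    QJinv K H J' * QJ K H J = 1 := by
  have h := congr(mulAntipodeMul K H $(hc.one_tmul_mul_assoc hJ hJ'))
  rwa [mulAntipodeMul_one_tmul_mul_assoc, mulAntipodeMul_idComul_mul, mulAntipodeMul_comulId,
    (hn.of_mul_eq_one hJ).2, hn.1, mul_one] at h

lemma IsTwist.comul_QJ (hc : IsTwist K H J) (hJ : J * J' = 1) (hn : IsNormalized K H J) :
    comul (QJ K H J) = antipodeSwap K H J' * (QJ K H J ⊗ₜ QJ K H J) * J' := by
  have h := congr(antipodeSwapMulComul K H $hc)
  rw [antipodeSwapMulComul_comulId_mul, antipodeSwapMulComul_idComul_mul,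
    hc.antipodeTmulOneMulComul_eq hJ hn, ← mul_assoc, Algebra.TensorProduct.tmul_mul_tmul,
    one_mul, mul_one] at h
  rw [mul_assoc, ← h, ← mul_assoc, ← antipodeSwap_mul, hJ, antipodeSwap_one, one_mul]

lemma IsTwist.comul_QJinv (hc : IsTwist K H J) (hJ : J * J' = 1) (hJ' : J' * J = 1)
    (hn : IsNormalized K H J) :
    comul (QJinv K H J') = J * (QJinv K H J' ⊗ₜ QJinv K H J') * antipodeSwap K H J := by
  refine left_inv_eq_right_inv (a := comul (QJ K H J)) ?_ ?_
  · rw [← Bialgebra.comul_mul, hc.QJinv_mul_QJ hJ hJ' hn, Bialgebra.comul_one]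
  · rw [hc.comul_QJ hJ hn]
    simp only [mul_assoc]
    rw [← mul_assoc J' J, hJ', one_mul, ← mul_assoc (_ ⊗ₜ _),
      Algebra.TensorProduct.tmul_mul_tmul, hc.QJ_mul_QJinv hJ hn, ← Algebra.TensorProduct.one_def,
      one_mul, ← antipodeSwap_mul, hJ, antipodeSwap_one]

end Twist

variable {K H : Type*} [Field K] [Ring H] [HopfAlgebra K H]

theorem comul_uJ_general
    (J J' : H ⊗[K] H)
    (hJ : J * J' = 1) (hJ' : J' * J = 1) (hc : IsTwist K H J) (hn : IsNormalized K H J) :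
    Coalgebra.comul (R := K) (QJinv K H J' * anti K H (QJ K H J)) =
      J * ((QJinv K H J' * anti K H (QJ K H J)) ⊗ₜ (QJinv K H J' * anti K H (QJ K H J))) *
        TensorProduct.map (anti K H ∘ₗ anti K H) (anti K H ∘ₗ anti K H) J' := by
  rw [Bialgebra.comul_mul, hc.comul_QJinv hJ hJ' hn, anti, comul_antipode, hc.comul_QJ hJ hn,
    antipodeSwap_mul, antipodeSwap_mul, antipodeSwap_antipodeSwap, antipodeSwap_tmul]
  simp only [mul_assoc]
  rw [← mul_assoc (antipodeSwap K H J), ← antipodeSwap_mul, hJ', antipodeSwap_one, one_mul,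
    ← mul_assoc (_ ⊗ₜ _), Algebra.TensorProduct.tmul_mul_tmul]

theorem comul_uJ (hS : Function.Bijective (anti K H))
    (J J' : H ⊗[K] H)
    (hJ : J * J' = 1) (hJ' : J' * J = 1) (hc : IsTwist K H J) (hn : IsNormalized K H J) :
    Coalgebra.comul (R := K) (QJinv K H J' * anti K H (QJ K H J)) =
      J * ((QJinv K H J' * anti K H (QJ K H J)) ⊗ₜ (QJinv K H J' * anti K H (QJ K H J))) *
        TensorProduct.map (anti K H ∘ₗ anti K H) (anti K H ∘ₗ anti K H) J' :=
  comul_uJ_general J J' hJ hJ' hc hn
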